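/- In the prescription system for subsystem 2, for every t < T, every history (z²_{1:t}, γ_{0:t−1}, u²_{0:t−1}, u³_{0:t−1}), every γ_t, u²_t, u³_t and every z²_{t+1}, the subsystem-2 information state satisfies the strategy-independent recursion P²_{t+1} = { ( f̂_t(x̂, γ_t(P), u²_t, u³_t, w), f̃¹_t(P, (γ_t(P), u²_t, u³_t), ĥ¹_t(x̂, γ_t(P), u²_t, u³_t)) ) : (x̂, P) ∈ Q_t, w ∈ 𝒲_t }, where Q_t := { (x̂, P) ∈ P²_t : ĥ²_t(x̂, γ_t(P), u²_t, u³_t) = z²_{t+1} }. In particular there exists a map f̃²_t, independent of any strategy, with P²_{t+1} = f̃²_t(P²_t, γ_t, u²_t, u³_t, z²_{t+1}). -/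
import Mathlib


/-- The prescription system for subsystem 2. -/
structure Pres2 where
  T : ℕ
  hT : 1 ≤ T
  X : ℕ → Type
  U1 : ℕ → Type
  U2 : ℕ → Type
  U3 : ℕ → Type
  W : ℕ → Type
  Z1 : ℕ → Type
  Z2 : ℕ → Type
  f : ∀ t, X t → U1 t → U2 t → U3 t → W t → X (t+1)
  h1 : ∀ t, X t → U1 t → U2 t → U3 t → Z1 (t+1)
  h2 : ∀ t, X t → U1 t → U2 t → U3 t → Z2 (t+1)
  ftil1 : ∀ t, Set (X t) → (U1 t × U2 t × U3 t) → Z1 (t+1) → Set (X (t+1))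
  X0 : Set (X 0)
  X0ne : X0.Nonempty
  Xfin : ∀ t, Finite (X t)
  Xne : ∀ t, Nonempty (X t)
  U1fin : ∀ t, Finite (U1 t)
  U1ne : ∀ t, Nonempty (U1 t)
  U2fin : ∀ t, Finite (U2 t)
  U2ne : ∀ t, Nonempty (U2 t)
  U3fin : ∀ t, Finite (U3 t)
  U3ne : ∀ t, Nonempty (U3 t)
  Wfin : ∀ t, Finite (W t)
  Wne : ∀ t, Nonempty (W t)
  Z1fin : ∀ t, Finite (Z1 t)
  Z1ne : ∀ t, Nonempty (Z1 t)
  Z2fin : ∀ t, Finite (Z2 t)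
  Z2ne : ∀ t, Nonempty (Z2 t)

namespace Pres2

variable (S : Pres2)

/-- Open-loop pair trajectory `(x̂_t, P¹_t)` generated by prescriptions `γ` and
actions `u2`, `u3`. -/
def ol2 (γ : ∀ s, Set (S.X s) → S.U1 s) (u2 : ∀ s, S.U2 s) (u3 : ∀ s, S.U3 s)
    (x0 : S.X 0) (w : ∀ s, S.W s) : ∀ t : ℕ, S.X t × Set (S.X t)
  | 0 => (x0, S.X0)
  | t+1 =>
    let p := ol2 γ u2 u3 x0 w t
    let u1 := γ t p.2
    (S.f t p.1 u1 (u2 t) (u3 t) (w t),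
     S.ftil1 t p.2 (u1, u2 t, u3 t) (S.h1 t p.1 u1 (u2 t) (u3 t)))

/-- The subsystem-2 information state
`P²_t(z²_{1:t}, γ_{0:t-1}, u²_{0:t-1}, u³_{0:t-1})`. -/
def P2 (t : ℕ) (z : ∀ ℓ : Fin t, S.Z2 (ℓ.1+1))
    (γ : ∀ ℓ : Fin t, Set (S.X ℓ.1) → S.U1 ℓ.1)
    (u2 : ∀ ℓ : Fin t, S.U2 ℓ.1) (u3 : ∀ ℓ : Fin t, S.U3 ℓ.1) :
    Set (S.X t × Set (S.X t)) :=
  {q | ∃ (γf : ∀ s, Set (S.X s) → S.U1 s) (u2f : ∀ s, S.U2 s) (u3f : ∀ s, S.U3 s),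
    (∀ ℓ : Fin t, γf ℓ.1 = γ ℓ ∧ u2f ℓ.1 = u2 ℓ ∧ u3f ℓ.1 = u3 ℓ) ∧
    ∃ x0 ∈ S.X0, ∃ w : ∀ s, S.W s,
      (∀ ℓ : Fin t,
        S.h2 ℓ.1 (S.ol2 γf u2f u3f x0 w ℓ.1).1
          (γf ℓ.1 (S.ol2 γf u2f u3f x0 w ℓ.1).2) (u2f ℓ.1) (u3f ℓ.1) = z ℓ) ∧
      S.ol2 γf u2f u3f x0 w t = q}

end Pres2


private lemma ol2_congr (S : Pres2) (γf γf' : ∀ s, Set (S.X s) → S.U1 s)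
    (u2f u2f' : ∀ s, S.U2 s) (u3f u3f' : ∀ s, S.U3 s) (x0 : S.X 0)
    (w w' : ∀ s, S.W s) :
    ∀ s : ℕ, (∀ ℓ, ℓ < s → γf ℓ = γf' ℓ ∧ u2f ℓ = u2f' ℓ ∧ u3f ℓ = u3f' ℓ ∧ w ℓ = w' ℓ) →
      S.ol2 γf u2f u3f x0 w s = S.ol2 γf' u2f' u3f' x0 w' s
  | 0, _ => rfl
  | s+1, h => by
    have ih := ol2_congr S γf γf' u2f u2f' u3f u3f' x0 w w' s
      (fun ℓ hℓ => h ℓ (Nat.lt_succ_of_lt hℓ))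
    obtain ⟨e1, e2, e3, e4⟩ := h s (Nat.lt_succ_self s)
    simp only [Pres2.ol2, ih, e1, e2, e3, e4]

/-- the subsystem-2 information state satisfies a
strategy-independent recursion. -/
theorem stmt7 (S : Pres2) : ∀ t : ℕ, t < S.T →
    (∀ (z : ∀ ℓ : Fin t, S.Z2 (ℓ.1+1))
       (γ : ∀ ℓ : Fin t, Set (S.X ℓ.1) → S.U1 ℓ.1)
       (u2 : ∀ ℓ : Fin t, S.U2 ℓ.1) (u3 : ∀ ℓ : Fin t, S.U3 ℓ.1)
       (γt : Set (S.X t) → S.U1 t) (u2t : S.U2 t) (u3t : S.U3 t)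
       (znext : S.Z2 (t+1)),
      S.P2 (t+1)
          (Fin.snoc (α := fun ℓ : Fin (t+1) => S.Z2 (ℓ.1+1)) z znext)
          (Fin.snoc (α := fun ℓ : Fin (t+1) => Set (S.X ℓ.1) → S.U1 ℓ.1) γ γt)
          (Fin.snoc (α := fun ℓ : Fin (t+1) => S.U2 ℓ.1) u2 u2t)
          (Fin.snoc (α := fun ℓ : Fin (t+1) => S.U3 ℓ.1) u3 u3t) =
        {q' | ∃ p ∈ {p ∈ S.P2 t z γ u2 u3 |
                S.h2 t p.1 (γt p.2) u2t u3t = znext},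
          ∃ w : S.W t,
            q' = (S.f t p.1 (γt p.2) u2t u3t w,
                  S.ftil1 t p.2 (γt p.2, u2t, u3t)
                    (S.h1 t p.1 (γt p.2) u2t u3t))}) ∧
    ∃ F : Set (S.X t × Set (S.X t)) → (Set (S.X t) → S.U1 t) → S.U2 t → S.U3 t →
        S.Z2 (t+1) → Set (S.X (t+1) × Set (S.X (t+1))),
      ∀ (z : ∀ ℓ : Fin t, S.Z2 (ℓ.1+1))
        (γ : ∀ ℓ : Fin t, Set (S.X ℓ.1) → S.U1 ℓ.1)
        (u2 : ∀ ℓ : Fin t, S.U2 ℓ.1) (u3 : ∀ ℓ : Fin t, S.U3 ℓ.1)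
        (γt : Set (S.X t) → S.U1 t) (u2t : S.U2 t) (u3t : S.U3 t)
        (znext : S.Z2 (t+1)),
        S.P2 (t+1)
            (Fin.snoc (α := fun ℓ : Fin (t+1) => S.Z2 (ℓ.1+1)) z znext)
            (Fin.snoc (α := fun ℓ : Fin (t+1) => Set (S.X ℓ.1) → S.U1 ℓ.1) γ γt)
            (Fin.snoc (α := fun ℓ : Fin (t+1) => S.U2 ℓ.1) u2 u2t)
            (Fin.snoc (α := fun ℓ : Fin (t+1) => S.U3 ℓ.1) u3 u3t) =
          F (S.P2 t z γ u2 u3) γt u2t u3t znext := by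
  intro t ht
  have main : ∀ (z : ∀ ℓ : Fin t, S.Z2 (ℓ.1+1))
       (γ : ∀ ℓ : Fin t, Set (S.X ℓ.1) → S.U1 ℓ.1)
       (u2 : ∀ ℓ : Fin t, S.U2 ℓ.1) (u3 : ∀ ℓ : Fin t, S.U3 ℓ.1)
       (γt : Set (S.X t) → S.U1 t) (u2t : S.U2 t) (u3t : S.U3 t)
       (znext : S.Z2 (t+1)),
      S.P2 (t+1)
          (Fin.snoc (α := fun ℓ : Fin (t+1) => S.Z2 (ℓ.1+1)) z znext)
          (Fin.snoc (α := fun ℓ : Fin (t+1) => Set (S.X ℓ.1) → S.U1 ℓ.1) γ γt)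
          (Fin.snoc (α := fun ℓ : Fin (t+1) => S.U2 ℓ.1) u2 u2t)
          (Fin.snoc (α := fun ℓ : Fin (t+1) => S.U3 ℓ.1) u3 u3t) =
        {q' | ∃ p ∈ {p ∈ S.P2 t z γ u2 u3 |
                S.h2 t p.1 (γt p.2) u2t u3t = znext},
          ∃ w : S.W t,
            q' = (S.f t p.1 (γt p.2) u2t u3t w,
                  S.ftil1 t p.2 (γt p.2, u2t, u3t)
                    (S.h1 t p.1 (γt p.2) u2t u3t))} := by
    intro z γ u2 u3 γt u2t u3t znext
    ext q'
    constructor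
    · rintro ⟨γf, u2f, u3f, hag, x0, hx0, w, hz, hol⟩
      have hlastag := hag (Fin.last t)
      simp only [Fin.snoc_last, Fin.val_last] at hlastag
      obtain ⟨hγt, hu2t, hu3t⟩ := hlastag
      refine ⟨S.ol2 γf u2f u3f x0 w t,
        ⟨⟨γf, u2f, u3f, ?_, x0, hx0, w, ?_, rfl⟩, ?_⟩, w t, ?_⟩
      · intro ℓ
        have := hag ℓ.castSucc
        simpa using this
      · intro ℓ
        have := hz ℓ.castSucc
        simpa using this
      · have hlast := hz (Fin.last t)
        simp only [Fin.snoc_last, Fin.val_last] at hlast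
        rw [← hγt, ← hu2t, ← hu3t]
        exact hlast
      · rw [← hol]
        show (S.f t _ (γf t _) (u2f t) (u3f t) (w t),
          S.ftil1 t _ (γf t _, u2f t, u3f t) (S.h1 t _ (γf t _) (u2f t) (u3f t))) = _
        rw [hγt, hu2t, hu3t]
    · rintro ⟨p, ⟨⟨γf, u2f, u3f, hag, x0, hx0, w, hz, hol⟩, hh2⟩, wt, hq'⟩
      classical
      set γf' := Function.update γf t γt with hγf'
      set u2f' := Function.update u2f t u2t with hu2f'
      set u3f' := Function.update u3f t u3t with hu3f'
      set w' := Function.update w t wt with hw'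
      have hne : ∀ ℓ : ℕ, ℓ < t → γf' ℓ = γf ℓ ∧ u2f' ℓ = u2f ℓ ∧ u3f' ℓ = u3f ℓ
          ∧ w' ℓ = w ℓ := by
        intro ℓ hℓ
        refine ⟨?_, ?_, ?_, ?_⟩ <;>
          simp [hγf', hu2f', hu3f', hw', Function.update_of_ne hℓ.ne]
      have key : ∀ s, s ≤ t →
          S.ol2 γf' u2f' u3f' x0 w' s = S.ol2 γf u2f u3f x0 w s := by
        intro s hs
        exact ol2_congr S γf' γf u2f' u2f u3f' u3f x0 w' w s
          (fun ℓ hℓ => hne ℓ (lt_of_lt_of_le hℓ hs))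
      have htt : S.ol2 γf' u2f' u3f' x0 w' t = p := (key t le_rfl).trans hol
      have hγtt : γf' t = γt := by simp [hγf']
      have hu2tt : u2f' t = u2t := by simp [hu2f']
      have hu3tt : u3f' t = u3t := by simp [hu3f']
      have hwt : w' t = wt := by simp [hw']
      refine ⟨γf', u2f', u3f', ?_, x0, hx0, w', ?_, ?_⟩
      · intro ℓ
        rcases Fin.eq_castSucc_or_eq_last ℓ with ⟨j, rfl⟩ | rfl
        · have hj := hag j
          have hjt : (j : ℕ) ≠ t := j.2.ne
          refine ⟨?_, ?_, ?_⟩ <;>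
            simp [hγf', hu2f', hu3f', Function.update_of_ne hjt, hj.1, hj.2.1, hj.2.2]
        · simp [hγtt, hu2tt, hu3tt]
      · intro ℓ
        rcases Fin.eq_castSucc_or_eq_last ℓ with ⟨j, rfl⟩ | rfl
        · have hjt : (j : ℕ) ≠ t := j.2.ne
          have hk := key j.1 (le_of_lt j.2)
          have := hz j
          simp only [Fin.coe_castSucc, Fin.snoc_castSucc]
          rw [hk]
          simpa [hγf', hu2f', hu3f', Function.update_of_ne hjt] using this
        · simp only [Fin.val_last, Fin.snoc_last]
          rw [htt, hγtt, hu2tt, hu3tt]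
          exact hh2
      · show (S.f t _ (γf' t _) (u2f' t) (u3f' t) (w' t),
          S.ftil1 t _ (γf' t _, u2f' t, u3f' t)
            (S.h1 t _ (γf' t _) (u2f' t) (u3f' t))) = q'
        rw [htt, hγtt, hu2tt, hu3tt, hwt, hq']
  refine ⟨main, ⟨fun Pt γt u2t u3t znext =>
    {q' | ∃ p ∈ {p ∈ Pt | S.h2 t p.1 (γt p.2) u2t u3t = znext},
      ∃ w : S.W t,
        q' = (S.f t p.1 (γt p.2) u2t u3t w,
              S.ftil1 t p.2 (γt p.2, u2t, u3t)
                (S.h1 t p.1 (γt p.2) u2t u3t))}, ?_⟩⟩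
  intro z γ u2 u3 γt u2t u3t znext
  exact main z γ u2 u3 γt u2t u3t znext
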